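/- arXiv:1212.2049 — 9 statements merged into one kernel-verified Lean document; each statement's English description precedes it below -/
import Mathlib

section
/- An ultrafilter U on ℕ lies in the closure of the smallest two-sided ideal K(βℕ,⊕) of the semigroup (βℕ,⊕) if and only if every set A ∈ U is piecewise syndetic (i.e., there is n such that the union of translates A−i for i ≤ n is thick, meaning it contains arbitrarily long intervals). -/
/-- A set of naturals is thick if it contains arbitrarily long intervals. -/
def Thick (A : Set ℕ) : Prop := ∀ k : ℕ, ∃ a : ℕ, ∀ i < k, a + i ∈ A

/-- `A` is piecewise syndetic if some finite union of translates `A - i`, `i ≤ n`, is thick. -/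
def PiecewiseSyndetic (A : Set ℕ) : Prop :=
  ∃ n : ℕ, Thick {m : ℕ | ∃ i ≤ n, m + i ∈ A}
/-- The sum of ultrafilters on ℕ: `A ∈ usum U V ↔ {n | {m | n + m ∈ A} ∈ V} ∈ U`. -/
def usum (U V : Ultrafilter ℕ) : Ultrafilter ℕ :=
  U.bind fun n => V.map fun m => n + m
/-- Two-sided ideals of the semigroup `(βℕ, ⊕)`. -/
def IsTwoSidedIdeal (I : Set (Ultrafilter ℕ)) : Prop :=
  I.Nonempty ∧ ∀ U ∈ I, ∀ V : Ultrafilter ℕ, usum U V ∈ I ∧ usum V U ∈ I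

/-- `K(βℕ, ⊕)`, the smallest two-sided ideal of `(βℕ, ⊕)`. -/
def KIdeal : Set (Ultrafilter ℕ) := ⋂₀ {I : Set (Ultrafilter ℕ) | IsTwoSidedIdeal I}

attribute [local instance] Ultrafilter.add Ultrafilter.addSemigroup

open Filter Set

namespace StmtAux

lemma mem_usum {U V : Ultrafilter ℕ} {A : Set ℕ} :
    A ∈ usum U V ↔ {n | {m | n + m ∈ A} ∈ V} ∈ U := Iff.rfl

lemma usum_eq (U V : Ultrafilter ℕ) : usum U V = U + V := by
  apply Ultrafilter.coe_inj.mp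
  ext A
  rw [Ultrafilter.mem_coe, mem_usum]
  have h := Ultrafilter.eventually_add U V (· ∈ A)
  simpa [Filter.eventually_iff] using h.symm

lemma usum_assoc (U V W : Ultrafilter ℕ) : usum (usum U V) W = usum U (usum V W) := by
  simp only [usum_eq]; exact add_assoc U V W

lemma continuous_usum_right (V : Ultrafilter ℕ) : Continuous fun U => usum U V := by
  have : (fun U => usum U V) = (· + V) := funext fun U => usum_eq U V
  rw [this]; exact Ultrafilter.continuous_add_left V

/-! ### Combinatorial lemmas -/

lemma thick_mono {A B : Set ℕ} (h : A ⊆ B) (hA : Thick A) : Thick B :=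
  fun k => (hA k).imp fun _ ha i hi => h (ha i hi)

lemma ps_shift {A : Set ℕ} {n : ℕ} (h : PiecewiseSyndetic {m | n + m ∈ A}) :
    PiecewiseSyndetic A := by
  obtain ⟨k, hk⟩ := h
  refine ⟨k + n, thick_mono ?_ hk⟩
  rintro m ⟨i, hi, hmi⟩
  refine ⟨i + n, by omega, ?_⟩
  rw [show m + (i + n) = n + (m + i) from by ring]
  exact hmi

lemma ps_usum {A : Set ℕ} {V : Ultrafilter ℕ}
    (h : PiecewiseSyndetic {n | {m | n + m ∈ A} ∈ V}) : PiecewiseSyndetic A := by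
  obtain ⟨k, hk⟩ := h
  refine ⟨k, fun ℓ => ?_⟩
  obtain ⟨a, ha⟩ := hk ℓ
  have H : ∀ j : ℕ, ∃ i : ℕ, j < ℓ → i ≤ k ∧ {m | (a + j + i) + m ∈ A} ∈ V := by
    intro j
    by_cases hj : j < ℓ
    · obtain ⟨i, hik, hB⟩ := ha j hj
      exact ⟨i, fun _ => ⟨hik, hB⟩⟩
    · exact ⟨0, fun hcon => absurd hcon hj⟩
  choose i hi using H
  have hInt : (⋂ j ∈ Finset.range ℓ, {m | (a + j + i j) + m ∈ A}) ∈ V :=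
    Ultrafilter.mem_coe.mp <| (Filter.biInter_finset_mem (Finset.range ℓ)).mpr
      fun j hj => (hi j (Finset.mem_range.mp hj)).2
  obtain ⟨m, hm⟩ := Ultrafilter.nonempty_of_mem hInt
  refine ⟨m + a, fun j hj => ?_⟩
  refine ⟨i j, (hi j hj).1, ?_⟩
  have hmj : m ∈ {x | (a + j + i j) + x ∈ A} := by
    have := Set.mem_iInter₂.mp hm j (Finset.mem_range.mpr hj)
    exact this
  rw [show m + a + j + i j = (a + j + i j) + m from by ring]
  exact hmj

lemma ps_of_syndetic {A : Set ℕ} {V : Ultrafilter ℕ} {d : ℕ}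
    (h : ∀ a : ℕ, ∃ i ≤ d, {m | (a + i) + m ∈ A} ∈ V) : PiecewiseSyndetic A := by
  refine ⟨d, fun ℓ => ?_⟩
  have H : ∀ j : ℕ, ∃ i : ℕ, i ≤ d ∧ {m | (j + i) + m ∈ A} ∈ V := by
    intro j
    obtain ⟨i, hik, hB⟩ := h j
    exact ⟨i, hik, hB⟩
  choose i hid hS using H
  have hInt : (⋂ j ∈ Finset.range ℓ, {m | (j + i j) + m ∈ A}) ∈ V :=
    Ultrafilter.mem_coe.mp <| (Filter.biInter_finset_mem (Finset.range ℓ)).mpr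
      fun j _ => hS j
  obtain ⟨m, hm⟩ := Ultrafilter.nonempty_of_mem hInt
  refine ⟨m, fun j hj => ?_⟩
  refine ⟨i j, hid j, ?_⟩
  have hmj : m ∈ {x | (j + i j) + x ∈ A} := Set.mem_iInter₂.mp hm j (Finset.mem_range.mpr hj)
  rw [show m + j + i j = (j + i j) + m from by ring]
  exact hmj

lemma exists_shift_ultrafilter {T : Set ℕ} (hT : Thick T) :
    ∃ w : Ultrafilter ℕ, ∀ j : ℕ, {m | j + m ∈ T} ∈ w := by
  choose a ha using hT
  refine ⟨(Filter.hyperfilter ℕ).map a, fun j => ?_⟩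
  rw [Ultrafilter.mem_map]
  have hcof : {k : ℕ | j < k} ∈ Filter.hyperfilter ℕ := by
    have : ({k : ℕ | k ≤ j} : Set ℕ)ᶜ ∈ Filter.hyperfilter ℕ :=
      Filter.compl_mem_hyperfilter_of_finite (Set.finite_le_nat j)
    convert this using 1
    ext k; simp only [Set.mem_setOf_eq, Set.mem_compl_iff, not_le]
  refine Filter.mem_of_superset hcof ?_
  intro k hk
  show j + a k ∈ T
  rw [Nat.add_comm]
  exact ha k j hk

/-! ### Minimal left ideals -/

def LeftIdealSet : Set (Set (Ultrafilter ℕ)) :=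
  {L | L.Nonempty ∧ IsClosed L ∧ ∀ v ∈ L, ∀ u : Ultrafilter ℕ, usum u v ∈ L}

lemma exists_minimal_left_ideal : ∃ M, Minimal (· ∈ LeftIdealSet) M := by
  apply zorn_superset
  intro c hc hchain
  rcases c.eq_empty_or_nonempty with rfl | hne
  · exact ⟨Set.univ, ⟨⟨pure 0, trivial⟩, isClosed_univ, fun _ _ _ => trivial⟩,
      by simp⟩
  · refine ⟨⋂₀ c, ⟨?_, ?_, ?_⟩, fun s hs => Set.sInter_subset_of_mem hs⟩
    · haveI : Nonempty c := hne.to_subtype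
      apply IsCompact.nonempty_sInter_of_directed_nonempty_isCompact_isClosed
      · intro x hx y hy
        rcases hchain.total hx hy with h | h
        · exact ⟨x, hx, Set.Subset.rfl, h⟩
        · exact ⟨y, hy, h, Set.Subset.rfl⟩
      · exact fun L hL => (hc hL).1
      · exact fun L hL => (hc hL).2.1.isCompact
      · exact fun L hL => (hc hL).2.1
    · exact isClosed_sInter fun L hL => (hc hL).2.1
    · intro v hv u L hL
      exact (hc hL).2.2 v (hv L hL) u

lemma range_eq {M : Set (Ultrafilter ℕ)} (hM : Minimal (· ∈ LeftIdealSet) M)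
    {z : Ultrafilter ℕ} (hz : z ∈ M) :
    (Set.range fun u => usum u z) = M := by
  have hmem : (Set.range fun u => usum u z) ∈ LeftIdealSet := by
    refine ⟨⟨usum z z, z, rfl⟩, ?_, ?_⟩
    · exact (isCompact_range (continuous_usum_right z)).isClosed
    · rintro v ⟨u', rfl⟩ u
      exact ⟨usum u u', usum_assoc u u' z⟩
  have hsub : (Set.range fun u => usum u z) ⊆ M := by
    rintro _ ⟨u, rfl⟩; exact hM.prop.2.2 z hz u
  exact Set.Subset.antisymm hsub (hM.2 hmem hsub)

lemma minimal_subset_ideal {M : Set (Ultrafilter ℕ)} (hM : Minimal (· ∈ LeftIdealSet) M)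
    {I : Set (Ultrafilter ℕ)} (hI : IsTwoSidedIdeal I) : M ⊆ I := by
  obtain ⟨z, hz⟩ := hM.prop.1
  obtain ⟨u, hu⟩ := hI.1
  have hyI : usum (usum z u) z ∈ I := (hI.2 _ (hI.2 u hu z).2 z).1
  have hyM : usum (usum z u) z ∈ M := hM.prop.2.2 z hz (usum z u)
  rw [← range_eq hM hyM]
  rintro _ ⟨u', rfl⟩
  exact (hI.2 _ hyI u').2

lemma mem_minimal_ps {M : Set (Ultrafilter ℕ)} (hM : Minimal (· ∈ LeftIdealSet) M)
    {z : Ultrafilter ℕ} (hz : z ∈ M) {A : Set ℕ} (hA : A ∈ z) : PiecewiseSyndetic A := by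
  set B := {n : ℕ | {m | n + m ∈ A} ∈ z} with hBdef
  by_cases hsyn : ∃ d : ℕ, ∀ a : ℕ, ∃ i ≤ d, a + i ∈ B
  · obtain ⟨d, hd⟩ := hsyn
    exact ps_of_syndetic (V := z) (d := d) fun a => hd a
  · push_neg at hsyn
    have hthick : Thick Bᶜ := by
      intro k
      obtain ⟨a, ha⟩ := hsyn k
      exact ⟨a, fun i hi => ha i (le_of_lt hi)⟩
    obtain ⟨w, hw⟩ := exists_shift_ultrafilter hthick
    have hnot : ∀ u : Ultrafilter ℕ, B ∉ usum u w := by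
      intro u hBu
      have hcompl : Bᶜ ∈ usum u w := by
        rw [mem_usum]
        exact Filter.univ_mem' fun n => hw n
      exact (Ultrafilter.compl_mem_iff_notMem.mp hcompl) hBu
    have hwz : usum w z ∈ M := hM.prop.2.2 z hz w
    have hzr : z ∈ Set.range fun u => usum u (usum w z) := by
      rw [range_eq hM hwz]; exact hz
    obtain ⟨u, hu⟩ := hzr
    have hz' : z = usum (usum u w) z := by rw [usum_assoc]; exact hu.symm
    have hBmem : B ∈ usum (usum u w) z → B ∈ z := fun _ => by
      rw [hz']; exact ‹B ∈ usum (usum u w) z›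
    have hA' : A ∈ usum (usum u w) z := by rw [← hz']; exact hA
    have : B ∈ usum u w := mem_usum.mp hA'
    exact absurd this (hnot u)

def Cset : Set (Ultrafilter ℕ) := {p : Ultrafilter ℕ | ∀ A ∈ p, PiecewiseSyndetic A}

lemma Cset_ideal (hne : Cset.Nonempty) : IsTwoSidedIdeal Cset := by
  refine ⟨hne, fun u hu v => ⟨?_, ?_⟩⟩
  · intro A hA
    exact ps_usum (hu _ (mem_usum.mp hA))
  · intro A hA
    obtain ⟨n, hn⟩ := Ultrafilter.nonempty_of_mem (mem_usum.mp hA)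
    exact ps_shift (hu _ hn)

lemma ps_mem_K {A : Set ℕ} (h : PiecewiseSyndetic A) : ∃ q ∈ KIdeal, A ∈ q := by
  obtain ⟨M, hM⟩ := exists_minimal_left_ideal
  obtain ⟨z, hz⟩ := hM.prop.1
  obtain ⟨n, hn⟩ := h
  obtain ⟨w, hw⟩ := exists_shift_ultrafilter hn
  have hT : {m | ∃ i ≤ n, m + i ∈ A} ∈ usum z w := by
    rw [mem_usum]
    exact Filter.univ_mem' fun j => hw j
  have hq0K : ∀ I, IsTwoSidedIdeal I → usum z w ∈ I := fun I hI =>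
    (hI.2 z (minimal_subset_ideal hM hI hz) w).1
  have hex : ∃ i ≤ n, {m | m + i ∈ A} ∈ usum z w := by
    by_contra hcon
    push_neg at hcon
    have hc : (⋂ i ∈ Finset.range (n + 1), {m : ℕ | m + i ∈ A}ᶜ) ∈ usum z w :=
      Ultrafilter.mem_coe.mp <| (Filter.biInter_finset_mem (Finset.range (n + 1))).mpr
        fun i hi => Ultrafilter.compl_mem_iff_notMem.mpr
          (hcon i (Nat.lt_succ_iff.mp (Finset.mem_range.mp hi)))
    obtain ⟨m, hm1, hm2⟩ := Ultrafilter.nonempty_of_mem (Filter.inter_mem hT hc)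
    obtain ⟨i, hin, hiA⟩ := hm1
    exact Set.mem_iInter₂.mp hm2 i (Finset.mem_range.mpr (Nat.lt_succ_iff.mpr hin)) hiA
  obtain ⟨i, hin, hAi⟩ := hex
  refine ⟨usum (pure i) (usum z w), ?_, ?_⟩
  · intro I hI
    exact (hI.2 _ (hq0K I hI.out) (pure i)).2
  · rw [mem_usum, Ultrafilter.mem_pure]
    show {m | i + m ∈ A} ∈ usum z w
    have : {m : ℕ | i + m ∈ A} = {m | m + i ∈ A} := by
      ext m
      simp only [Set.mem_setOf_eq]
      rw [Nat.add_comm]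
    rw [this]
    exact hAi

end StmtAux

open StmtAux in
/-- An ultrafilter on ℕ lies in the closure of the smallest two-sided ideal
`K(βℕ, ⊕)` iff every set in it is piecewise syndetic. -/
theorem stmt0 (U : Ultrafilter ℕ) :
    U ∈ closure KIdeal ↔ ∀ A ∈ U, PiecewiseSyndetic A := by
  constructor
  · intro hU A hA
    obtain ⟨q, hq1, hq2⟩ := mem_closure_iff.mp hU _ (ultrafilter_isOpen_basic A) hA
    obtain ⟨M, hM⟩ := exists_minimal_left_ideal
    obtain ⟨z, hz⟩ := hM.prop.1
    have hzC : z ∈ Cset := fun B hB => mem_minimal_ps hM hz hB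
    have hqC : q ∈ Cset := hq2 Cset (Cset_ideal ⟨z, hzC⟩)
    exact hqC A hq1
  · intro h
    rw [mem_closure_iff]
    intro O hO hUO
    obtain ⟨t, htB, hUt, htO⟩ := ultrafilterBasis_is_basis.exists_subset_of_mem_open hUO hO
    obtain ⟨A, rfl⟩ := htB
    obtain ⟨q, hqK, hqA⟩ := ps_mem_K (h A hUt)
    exact ⟨q, htO hqA, hqK⟩
end

section
/- If A ≤_fe B and A is piecewise syndetic, then B is piecewise syndetic. -/
/-- `A ≤_fe B`: every finite subset of `A` has a translate contained in `B`. -/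
def fe (A B : Set ℕ) : Prop :=
  ∀ F : Finset ℕ, ↑F ⊆ A → ∃ n : ℕ, ∀ a ∈ F, n + a ∈ B

/-- If `A ≤_fe B` and `A` is piecewise syndetic, then so is `B`. -/
theorem stmt3 (A B : Set ℕ) (hfe : fe A B) (hA : PiecewiseSyndetic A) :
    PiecewiseSyndetic B := by
  classical
  obtain ⟨n, hn⟩ := hA
  refine ⟨n, fun k => ?_⟩
  obtain ⟨a, ha⟩ := hn k
  set F : Finset ℕ := ((Finset.range (k + n + 1)).filter (fun d => a + d ∈ A)).image (a + ·)
    with hF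
  have hFA : ↑F ⊆ A := by
    intro x hx
    simp only [hF, Finset.coe_image, Set.mem_image, Finset.mem_coe, Finset.mem_filter,
      Finset.mem_range] at hx
    obtain ⟨d, ⟨_, hd⟩, rfl⟩ := hx
    exact hd
  obtain ⟨t, ht⟩ := hfe F hFA
  refine ⟨t + a, fun i hi => ?_⟩
  obtain ⟨j, hj, hij⟩ := ha i hi
  refine ⟨j, hj, ?_⟩
  have hmem : a + (i + j) ∈ F := by
    simp only [hF, Finset.mem_image, Finset.mem_filter, Finset.mem_range]
    exact ⟨i + j, ⟨by omega, by rw [← add_assoc]; exact hij⟩, rfl⟩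
  have := ht _ hmem
  show t + a + i + j ∈ B
  simpa [add_assoc] using this
end

section
/- If A ≤_fe B, then the Banach density of A is at most the Banach density of B, where the Banach density of A is lim sup over interval length n of the maximal relative density of A in an interval of length n. -/
/-- Banach density: `lim sup` over interval length `n` of the maximal relative
density of `A` in an interval of length `n`. -/
noncomputable def BD (A : Set ℕ) : ℝ :=
  Filter.limsup (fun n : ℕ => ⨆ a : ℕ, ((A ∩ Set.Ico a (a + n)).ncard : ℝ) / n)
    Filter.atTop

lemma inter_fin (S : Set ℕ) (a n : ℕ) : (S ∩ Set.Ico a (a + n)).Finite :=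
  (Set.finite_Ico a (a + n)).subset Set.inter_subset_right

lemma ncard_le (S : Set ℕ) (a n : ℕ) : (S ∩ Set.Ico a (a + n)).ncard ≤ n := by
  calc (S ∩ Set.Ico a (a + n)).ncard ≤ (Set.Ico a (a + n)).ncard :=
        Set.ncard_le_ncard Set.inter_subset_right (Set.finite_Ico _ _)
    _ = n := by rw [← Finset.coe_Ico, Set.ncard_coe_finset, Nat.card_Ico]; omega

lemma term_le_one (S : Set ℕ) (n a : ℕ) :
    ((S ∩ Set.Ico a (a + n)).ncard : ℝ) / n ≤ 1 := by
  rcases Nat.eq_zero_or_pos n with h | h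
  · subst h; simp
  · apply div_le_one_of_le₀
    · exact_mod_cast ncard_le S a n
    · positivity

lemma key (A B : Set ℕ) (hfe : fe A B) (n a : ℕ) :
    ∃ b, (A ∩ Set.Ico a (a + n)).ncard ≤ (B ∩ Set.Ico b (b + n)).ncard := by
  have hfin := inter_fin A a n
  obtain ⟨m, hm⟩ := hfe hfin.toFinset (by rw [hfin.coe_toFinset]; exact Set.inter_subset_left)
  refine ⟨m + a, ?_⟩
  have himg : (fun x => m + x) '' (A ∩ Set.Ico a (a + n)) ⊆ B ∩ Set.Ico (m + a) (m + a + n) := by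
    rintro _ ⟨x, ⟨hxA, hx1, hx2⟩, rfl⟩
    beta_reduce
    exact ⟨hm x (by rw [hfin.mem_toFinset]; exact ⟨hxA, hx1, hx2⟩), by omega, by omega⟩
  calc (A ∩ Set.Ico a (a + n)).ncard
      = ((fun x => m + x) '' (A ∩ Set.Ico a (a + n))).ncard :=
        (Set.ncard_image_of_injective _ (add_right_injective m)).symm
    _ ≤ _ := Set.ncard_le_ncard himg (inter_fin B (m + a) n)

/-- Finite embeddability does not decrease Banach density. -/
theorem stmt4 (A B : Set ℕ) (hfe : fe A B) : BD A ≤ BD B := by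
  unfold BD
  apply Filter.limsup_le_limsup
  · filter_upwards with n
    apply ciSup_le
    intro a
    obtain ⟨b, hb⟩ := key A B hfe n a
    calc ((A ∩ Set.Ico a (a + n)).ncard : ℝ) / n
        ≤ ((B ∩ Set.Ico b (b + n)).ncard : ℝ) / n := by
          have : ((A ∩ Set.Ico a (a + n)).ncard : ℝ) ≤
              ((B ∩ Set.Ico b (b + n)).ncard : ℝ) := by exact_mod_cast hb
          gcongr
      _ ≤ ⨆ c : ℕ, ((B ∩ Set.Ico c (c + n)).ncard : ℝ) / n :=
          le_ciSup ⟨1, Set.forall_mem_range.2 fun c => term_le_one B n c⟩ b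
  · have hbdd : Filter.IsBoundedUnder (· ≥ ·) Filter.atTop
        (fun n : ℕ => ⨆ a : ℕ, ((A ∩ Set.Ico a (a + n)).ncard : ℝ) / n) :=
      ⟨0, Filter.eventually_map.2 <| Filter.Eventually.of_forall fun n =>
        Real.iSup_nonneg fun a => by positivity⟩
    exact hbdd.isCoboundedUnder_le
  · exact ⟨1, Filter.eventually_map.2 <| Filter.Eventually.of_forall fun n =>
      ciSup_le fun a => term_le_one B n a⟩
end

section
/- For subsets A, B of ℕ, A is finitely embeddable in B if and only if there exists an ultrafilter V on ℕ such that for every ultrafilter U on ℕ with A ∈ U, one has B ∈ U ⊕ V. -/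
open Filter

theorem Ultrafilter.exists_forall_mem_iff {ι α : Type*} (s : ι → Set α) :
    (∃ V : Ultrafilter α, ∀ i, s i ∈ V) ↔
      ∀ F : Finset ι, (⋂ i ∈ F, s i).Nonempty := by
  constructor
  · rintro ⟨V, hV⟩ F
    exact Ultrafilter.nonempty_of_mem ((biInter_finset_mem F).2 fun i _ => hV i)
  · intro hs
    have hne : NeBot (⨅ i, 𝓟 (s i)) := by
      rw [iInf_eq_iInf_finset]
      simp_rw [iInf_principal_finset]
      refine iInf_neBot_of_directed' ?_ fun F => principal_neBot_iff.2 (hs F)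
      exact Antitone.directed_ge fun F G hFG =>
        principal_mono.2 (Set.biInter_subset_biInter_left hFG)
    exact ⟨Ultrafilter.of _, fun i =>
      Ultrafilter.of_le _ (mem_iInf_of_mem i (mem_principal_self _))⟩

theorem mem_usum {U V : Ultrafilter ℕ} {B : Set ℕ} :
    B ∈ usum U V ↔ {n | {m | n + m ∈ B} ∈ V} ∈ U := Iff.rfl

theorem forall_mem_usum_iff {A B : Set ℕ} {V : Ultrafilter ℕ} :
    (∀ U : Ultrafilter ℕ, A ∈ U → B ∈ usum U V) ↔
      ∀ a ∈ A, {m | a + m ∈ B} ∈ V := by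
  constructor
  · exact fun h a ha => mem_usum.1 (h (pure a) ha)
  · exact fun h U hA => mem_usum.2 (mem_of_superset hA h)

theorem fe_iff_forall_finset_nonempty {A B : Set ℕ} :
    fe A B ↔ ∀ F : Finset A, (⋂ a ∈ F, {m | (a : ℕ) + m ∈ B}).Nonempty := by
  constructor
  · intro h F
    obtain ⟨n, hn⟩ := h (F.map (Function.Embedding.subtype _)) (by simp)
    refine ⟨n, Set.mem_iInter₂.2 fun a ha => ?_⟩
    simpa [add_comm] using hn a (Finset.mem_map_of_mem _ ha)
  · classical
    intro h F hFA
    obtain ⟨n, hn⟩ := h (F.subtype (· ∈ A))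
    refine ⟨n, fun a ha => ?_⟩
    have := Set.mem_iInter₂.1 hn ⟨a, hFA ha⟩ (by simpa using ha)
    simpa [add_comm] using this

/-- `A ≤_fe B` iff some ultrafilter `V` satisfies: `B ∈ U ⊕ V` for every
ultrafilter `U` containing `A`. -/
theorem stmt5 (A B : Set ℕ) :
    fe A B ↔ ∃ V : Ultrafilter ℕ, ∀ U : Ultrafilter ℕ, A ∈ U → B ∈ usum U V := by
  simp only [forall_mem_usum_iff, fe_iff_forall_finset_nonempty,
    ← Ultrafilter.exists_forall_mem_iff, Subtype.forall]
end

section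
/- Every chain of ultrafilters under finite embeddability has an upper bound: if ⟨U_i⟩_{i∈I} is a family of ultrafilters on ℕ indexed by a linearly ordered set I with U_i ⊴_fe U_j whenever i ≤ j, then there exists an ultrafilter U with U_i ⊴_fe U for all i. -/
/-- Finite embeddability of ultrafilters: `U ⊴_fe V` iff every `B ∈ V`
contains a finitely embedded `A ∈ U`. -/
def ufe (U V : Ultrafilter ℕ) : Prop := ∀ B ∈ V, ∃ A ∈ U, fe A B

/-- Every `⊴_fe`-chain of ultrafilters has an upper bound. -/
theorem stmt12 {I : Type*} [LinearOrder I] (u : I → Ultrafilter ℕ)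
    (h : ∀ i j : I, i ≤ j → ufe (u i) (u j)) :
    ∃ U : Ultrafilter ℕ, ∀ i : I, ufe (u i) U := by
  rcases isEmpty_or_nonempty I with hI | hI
  · exact ⟨pure 0, fun i => (IsEmpty.false i).elim⟩
  · -- Take an ultrafilter V on I extending atTop, and U := V-lim u.
    set V : Ultrafilter I := Ultrafilter.of Filter.atTop with hV
    refine ⟨V.bind u, fun i B hB => ?_⟩
    have hB' : {j | B ∈ u j} ∈ V := hB
    have hIci : {j | i ≤ j} ∈ V := Ultrafilter.of_le Filter.atTop (Filter.mem_atTop i)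
    obtain ⟨j, hj1, hj2⟩ := Filter.nonempty_of_mem (V.toFilter.inter_mem hB' hIci)
    exact h i j hj2 B hj1
end

section
/- If U is a nonprincipal additively idempotent ultrafilter on ℕ, then every set A ∈ U satisfies Folkman's property: for every k there exists a k-element subset S ⊆ A with all nonempty finite sums of distinct elements of S contained in A. -/
/-- Every nonprincipal additively idempotent ultrafilter is a Folkman
ultrafilter: each of its members contains, for every `k`, a `k`-element set
all of whose nonempty finite sums lie in the member. -/
theorem stmt15 (U : Ultrafilter ℕ) (hnp : ∀ n : ℕ, U ≠ pure n)
    (hid : usum U U = U) :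
    ∀ A ∈ U, ∀ k : ℕ, ∃ S : Finset ℕ, ↑S ⊆ A ∧ S.card = k ∧
      ∀ T : Finset ℕ, T ⊆ S → T.Nonempty → (∑ t ∈ T, t) ∈ A := by
  have mem_usum : ∀ s : Set ℕ, s ∈ usum U U ↔ {n | {m | n + m ∈ s} ∈ U} ∈ U := by
    intro s
    change s ∈ Filter.bind (U : Filter ℕ) (fun n => ((U.map fun m => n + m) : Filter ℕ)) ↔ _
    rw [Filter.mem_bind']
    rfl
  have star : ∀ B : Set ℕ, B ∈ U → {n | n ∈ B ∧ {m | n + m ∈ B} ∈ U} ∈ U := by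
    intro B hB
    have h1 : {n | {m | n + m ∈ B} ∈ U} ∈ U := (mem_usum B).mp (by rw [hid]; exact hB)
    exact Filter.inter_mem hB h1
  have cofin : ∀ S : Finset ℕ, ((S : Set ℕ))ᶜ ∈ U := by
    intro S
    refine Ultrafilter.compl_mem_iff_notMem.mpr fun h => ?_
    obtain ⟨a, _, ha⟩ := Ultrafilter.eq_pure_of_finite_mem S.finite_toSet h
    exact hnp a ha
  intro A hA k
  suffices h : ∃ S : Finset ℕ, ∃ B : Set ℕ, B ∈ U ∧ B ⊆ A ∧ S.card = k ∧
      (∀ T : Finset ℕ, T ⊆ S → T.Nonempty → (∑ t ∈ T, t) ∈ A) ∧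
      (∀ T : Finset ℕ, T ⊆ S → T.Nonempty → ∀ b ∈ B, (∑ t ∈ T, t) + b ∈ A) by
    obtain ⟨S, B, _, _, hcard, hsum, _⟩ := h
    refine ⟨S, ?_, hcard, hsum⟩
    intro s hs
    simpa using hsum {s} (Finset.singleton_subset_iff.mpr hs) ⟨s, by simp⟩
  induction k with
  | zero =>
    refine ⟨∅, A, hA, le_refl _, rfl, ?_, ?_⟩ <;>
    · intro T hT hne
      simp [Finset.subset_empty.mp hT] at hne
  | succ k ih =>
    obtain ⟨S, B, hBU, hBA, hcard, hsum, hshift⟩ := ih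
    have hC : ({n | n ∈ B ∧ {m | n + m ∈ B} ∈ U} ∩ (↑S)ᶜ) ∈ U :=
      Filter.inter_mem (star B hBU) (cofin S)
    obtain ⟨n, ⟨hnB, hnU⟩, hnS⟩ := Ultrafilter.nonempty_of_mem hC
    have hnS' : n ∉ S := hnS
    refine ⟨insert n S, B ∩ {m | n + m ∈ B}, Filter.inter_mem hBU hnU,
      fun x hx => hBA hx.1, by rw [Finset.card_insert_of_notMem hnS', hcard], ?_, ?_⟩
    · intro T hT hne
      by_cases hnT : n ∈ T
      · have hT' : T.erase n ⊆ S := fun x hx =>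
          (Finset.mem_insert.mp (hT (Finset.mem_of_mem_erase hx))).resolve_left
            (Finset.ne_of_mem_erase hx)
        have hsumT : ∑ t ∈ T, t = n + ∑ t ∈ T.erase n, t := by
          conv_lhs => rw [← Finset.insert_erase hnT]
          rw [Finset.sum_insert (Finset.notMem_erase n T)]
        rcases (T.erase n).eq_empty_or_nonempty with he | hne'
        · rw [hsumT, he]; simpa using hBA hnB
        · rw [hsumT, add_comm]
          exact hshift _ hT' hne' n hnB
      · exact hsum T (fun x hx => (Finset.mem_insert.mp (hT hx)).resolve_left
          (fun h => hnT (h ▸ hx))) hne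
    · intro T hT hne b hb
      obtain ⟨hbB, hbB'⟩ := hb
      by_cases hnT : n ∈ T
      · have hT' : T.erase n ⊆ S := fun x hx =>
          (Finset.mem_insert.mp (hT (Finset.mem_of_mem_erase hx))).resolve_left
            (Finset.ne_of_mem_erase hx)
        have hsumT : ∑ t ∈ T, t = n + ∑ t ∈ T.erase n, t := by
          conv_lhs => rw [← Finset.insert_erase hnT]
          rw [Finset.sum_insert (Finset.notMem_erase n T)]
        rcases (T.erase n).eq_empty_or_nonempty with he | hne'
        · rw [hsumT, he]; simpa using hBA hbB'
        · rw [hsumT, show n + ∑ t ∈ T.erase n, t + b = (∑ t ∈ T.erase n, t) + (n + b) by omega]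
          exact hshift _ hT' hne' (n + b) hbB'
      · exact hshift T (fun x hx => (Finset.mem_insert.mp (hT hx)).resolve_left
          (fun h => hnT (h ▸ hx))) hne b hbB
end

section
/- For every ultrafilter U on ℕ that is multiplicatively idempotent and such that every U-large set contains distinct x, y, z with x + y = z, every set A ∈ U contains pairwise distinct elements a, b, c, d with a + b = c·d. In particular the polynomial x + y − zw is injectively partition regular on ℕ: for every finite coloring of ℕ∖{0} there exist pairwise distinct monochromatic a, b, c, d with a + b = c·d. -/
/-!
Let `U` be a multiplicatively idempotent Schur ultrafilter and `A ∈ U`. Idempotence puts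
`A⋆ = {n | n⁻¹A ∈ U}` in `U`, so the Schur property yields distinct `x, y ∈ A ∩ A⋆` with
`x + y ∈ A`. Any `d` in the `U`-large set `A ∩ x⁻¹A ∩ y⁻¹A`, taken large, gives
`x d + y d = (x + y) d`.

For partition regularity one needs such an ultrafilter: the Schur ultrafilters form a nonempty
closed subsemigroup of `(βℕ, ·)` (nonempty because additively idempotent nonprincipal
ultrafilters are Schur), which contains an idempotent by the Ellis–Numakura lemma. One of the
colour classes lies in it.
-/

/-- The product of ultrafilters on ℕ: `A ∈ uprod U V ↔ {n | {m | n * m ∈ A} ∈ V} ∈ U`. -/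
def uprod (U V : Ultrafilter ℕ) : Ultrafilter ℕ :=
  U.bind fun n => V.map fun m => n * m

open Filter

attribute [local instance] Ultrafilter.mul Ultrafilter.semigroup Ultrafilter.add
  Ultrafilter.addSemigroup

lemma mem_uprod {U V : Ultrafilter ℕ} {A : Set ℕ} :
    A ∈ uprod U V ↔ {n | {m | n * m ∈ A} ∈ V} ∈ U :=
  Iff.rfl

lemma uprod_eq_mul (U V : Ultrafilter ℕ) : uprod U V = U * V :=
  Ultrafilter.coe_inj.mp <| Filter.ext fun _ => mem_uprod.symm

lemma Ultrafilter.isClosed_setOf_forall_mem {α : Type*} (P : Set α → Prop) :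
    IsClosed {U : Ultrafilter α | ∀ A ∈ U, P A} := by
  have : {U : Ultrafilter α | ∀ A ∈ U, P A} = ⋂ A ∈ {A | ¬ P A}, {U | A ∈ U}ᶜ := by
    ext U
    simp only [Set.mem_ofPred_eq, Set.mem_iInter, Set.mem_compl_iff]
    exact forall_congr' fun A => not_imp_not.symm
  rw [this]
  exact isClosed_biInter fun A _ => (ultrafilter_isOpen_basic A).isClosed_compl

def Ultrafilter.IsSchur (U : Ultrafilter ℕ) : Prop :=
  ∀ A ∈ U, ∃ x ∈ A, ∃ y ∈ A, ∃ z ∈ A, x ≠ y ∧ x ≠ z ∧ y ≠ z ∧ x + y = z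

namespace Ultrafilter.IsSchur

variable {U V : Ultrafilter ℕ}

lemma le_cofinite (hU : U.IsSchur) : (U : Filter ℕ) ≤ cofinite := by
  refine U.le_cofinite_or_eq_pure.resolve_right ?_
  rintro ⟨a, rfl⟩
  obtain ⟨x, rfl, y, rfl, -, -, hxy, -⟩ := hU {a} rfl
  exact hxy rfl

lemma Ici_mem (hU : U.IsSchur) (k : ℕ) : Set.Ici k ∈ U :=
  hU.le_cofinite (Nat.cofinite_eq_atTop ▸ Ici_mem_atTop k)

lemma mul (hU : U.IsSchur) (hV : V.IsSchur) : (U * V).IsSchur := by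
  intro A hA
  obtain ⟨n, hn, hnA⟩ := U.nonempty_of_mem (inter_mem (hU.Ici_mem 1) hA)
  obtain ⟨x, hx, y, hy, z, hz, hxy, hxz, hyz, rfl⟩ := hV _ hnA
  have hinj {a b : ℕ} : a ≠ b → n * a ≠ n * b :=
    (mul_right_injective₀ (Nat.one_le_iff_ne_zero.mp hn)).ne
  exact ⟨n * x, hx, n * y, hy, n * (x + y), hz, hinj hxy, hinj hxz, hinj hyz, (mul_add n x y).symm⟩

end Ultrafilter.IsSchur

lemma Ultrafilter.isSchur_of_add_self_eq {U : Ultrafilter ℕ} (hU : U + U = U)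
    (hU₁ : Set.Ici 1 ∈ U) : U.IsSchur := by
  have hcof : (U : Filter ℕ) ≤ cofinite := by
    refine U.le_cofinite_or_eq_pure.resolve_right ?_
    rintro ⟨a, rfl⟩
    -- `pure a + pure a = pure (a + a)`, so `pure a` is idempotent only for `a = 0`
    have ha : a + a = a := show ({a} : Set ℕ) ∈ (pure a + pure a : Ultrafilter ℕ) by rw [hU]; rfl
    have ha₁ : 1 ≤ a := hU₁
    omega
  intro A hA
  have hA' : ∀ᶠ x in U, ∀ᶠ y in U, x + y ∈ A := (hU.symm ▸ hA : A ∈ U + U)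
  obtain ⟨x, ⟨hxA, hx₁ : 1 ≤ x⟩, hx⟩ := U.nonempty_of_mem (inter_mem (inter_mem hA hU₁) hA')
  obtain ⟨y, ⟨hyA, hy₁ : 1 ≤ y⟩, hyx, hxy⟩ := U.nonempty_of_mem <| inter_mem
    (inter_mem hA hU₁) (inter_mem (hcof (Set.finite_singleton x).compl_mem_cofinite) hx)
  exact ⟨x, hxA, y, hyA, x + y, hxy, Ne.symm hyx, by omega, by omega, rfl⟩

lemma Ultrafilter.exists_isSchur : ∃ U : Ultrafilter ℕ, U.IsSchur := by
  obtain ⟨U, hU₁, hU⟩ := exists_idempotent_in_compact_add_subsemigroup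
    Ultrafilter.continuous_add_left {U : Ultrafilter ℕ | Set.Ici 1 ∈ U} ⟨pure 1, le_rfl⟩
    (ultrafilter_isClosed_basic _).isCompact fun U _ V hV =>
      show ∀ᶠ m in U, ∀ᶠ n in V, m + n ∈ Set.Ici 1 from
        Eventually.of_forall fun m => Eventually.mono hV fun n (hn : 1 ≤ n) =>
          show 1 ≤ m + n by omega
  exact ⟨U, U.isSchur_of_add_self_eq hU hU₁⟩

lemma Ultrafilter.exists_isSchur_uprod_self_eq :
    ∃ U : Ultrafilter ℕ, uprod U U = U ∧ U.IsSchur := by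
  obtain ⟨U, hU, hidem⟩ := exists_idempotent_in_compact_subsemigroup
    Ultrafilter.continuous_mul_left {U : Ultrafilter ℕ | U.IsSchur} Ultrafilter.exists_isSchur
    (Ultrafilter.isClosed_setOf_forall_mem _).isCompact fun _ hU _ hV => hU.mul hV
  exact ⟨U, (uprod_eq_mul U U).trans hidem, hU⟩

lemma Ultrafilter.IsSchur.exists_add_eq_mul {U : Ultrafilter ℕ} (hU : U.IsSchur)
    (hidem : uprod U U = U) {A : Set ℕ} (hA : A ∈ U) :
    ∃ a ∈ A, ∃ b ∈ A, ∃ c ∈ A, ∃ d ∈ A,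
      a ≠ b ∧ a ≠ c ∧ a ≠ d ∧ b ≠ c ∧ b ≠ d ∧ c ≠ d ∧ a + b = c * d := by
  set A₂ := A ∩ Set.Ici 2
  have hA₂ : A₂ ∈ U := inter_mem hA (hU.Ici_mem 2)
  have hA₂' : {n | {m | n * m ∈ A₂} ∈ U} ∈ U := mem_uprod.mp (hidem.symm ▸ hA₂)
  obtain ⟨x, ⟨⟨hxA, hx₂⟩, hx⟩, y, ⟨⟨hyA, hy₂⟩, hy⟩, z, ⟨⟨hzA, -⟩, -⟩, hxy, -, -, rfl⟩ :=
    hU _ (inter_mem hA₂ hA₂')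
  obtain ⟨d, ⟨hxd, -⟩, ⟨hyd, -⟩, hdA, hd⟩ := U.nonempty_of_mem
    (inter_mem hx (inter_mem hy (inter_mem hA (hU.Ici_mem (x + y + 1)))))
  have hd : x + y < d := hd
  have hdx : d < x * d := lt_mul_left (by omega) hx₂
  have hdy : d < y * d := lt_mul_left (by omega) hy₂
  refine ⟨x * d, hxd, y * d, hyd, x + y, hzA, d, hdA,
    fun h => hxy (Nat.eq_of_mul_eq_mul_right (by omega) h), ?_, ?_, ?_, ?_, ?_,
    (add_mul x y d).symm⟩ <;> omega

/-- Any multiplicatively idempotent Schur ultrafilter witnesses injective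
partition regularity of `x + y - z·w`; in particular the polynomial
`x + y − zw` is injectively partition regular on ℕ. -/
theorem stmt17 :
    (∀ U : Ultrafilter ℕ, uprod U U = U →
      (∀ A ∈ U, ∃ x ∈ A, ∃ y ∈ A, ∃ z ∈ A, x ≠ y ∧ x ≠ z ∧ y ≠ z ∧ x + y = z) →
      ∀ A ∈ U, ∃ a ∈ A, ∃ b ∈ A, ∃ c ∈ A, ∃ d ∈ A,
        a ≠ b ∧ a ≠ c ∧ a ≠ d ∧ b ≠ c ∧ b ≠ d ∧ c ≠ d ∧ a + b = c * d) ∧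
    (∀ (r : ℕ) (col : ℕ → Fin r), ∃ a b c d : ℕ,
      0 < a ∧ 0 < b ∧ 0 < c ∧ 0 < d ∧
      a ≠ b ∧ a ≠ c ∧ a ≠ d ∧ b ≠ c ∧ b ≠ d ∧ c ≠ d ∧
      col a = col b ∧ col b = col c ∧ col c = col d ∧
      a + b = c * d) := by
  refine ⟨fun U hidem hU A hA => Ultrafilter.IsSchur.exists_add_eq_mul hU hidem hA, ?_⟩
  intro r col
  obtain ⟨U, hidem, hU⟩ := Ultrafilter.exists_isSchur_uprod_self_eq
  obtain ⟨i, hi⟩ : ∃ i, ∀ᶠ n in U, col n = i :=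
    Ultrafilter.eventually_exists_iff.mp (Eventually.of_forall fun n => ⟨col n, rfl⟩)
  obtain ⟨a, ⟨ha, ha₀⟩, b, ⟨hb, hb₀⟩, c, ⟨hc, hc₀⟩, d, ⟨hd, hd₀⟩, hab, hac, had, hbc, hbd, hcd,
    habcd⟩ := hU.exists_add_eq_mul hidem (inter_mem hi (hU.Ici_mem 1))
  exact ⟨a, b, c, d, ha₀, hb₀, hc₀, hd₀, hab, hac, had, hbc, hbd, hcd,
    ha.trans hb.symm, hb.trans hc.symm, hc.trans hd.symm, habcd⟩
end

section
/- For all natural numbers n, m with n + m ≥ 3, the equation x₁ + x₂ + ⋯ + x_n = y₁·y₂·⋯·y_m is injectively partition regular on ℕ: for every finite coloring of the positive integers there are pairwise distinct monochromatic positive integers x₁,…,x_n, y₁,…,y_m with ∑ x_i = ∏ y_j. -/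
/-!
Take an ultrafilter `p` on `ℕ` that is multiplicatively idempotent and lies in the
closure of the nonprincipal additive idempotents; it exists because that closure is a
closed left ideal of `(βℕ, ·)`. Let `C ∈ p` be a colour class. Multiplicative idempotence
gives `y₁ < ⋯ < y_{m-1}` in `C` with `q = ∏ yⱼ` such that `q * z ∈ C` for `p`-almost all `z`,
so `C ∩ q⁻¹C ∈ p`, and this set lies in some nonprincipal additive idempotent `e`. Additive
idempotence of `e` gives fast-growing `u₁, …, u_n ∈ C ∩ q⁻¹C` whose sum `T` lies there too.
Then `xᵢ = q uᵢ` and `y₁, …, y_{m-1}, T` solve the equation, as `∑ xᵢ = q T`; the growth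
keeps all values distinct, and `n + m ≥ 3` rules out `T = q u_n`.
-/

open Filter Function

attribute [local instance] Ultrafilter.mul Ultrafilter.add
  Ultrafilter.semigroup Ultrafilter.addSemigroup

namespace Ultrafilter

@[to_additive]
theorem map_mul_of_map_mul {M N : Type*} [Mul M] [Mul N] {f : M → N}
    (hf : ∀ a b, f (a * b) = f a * f b) (U V : Ultrafilter M) :
    (U * V).map f = U.map f * V.map f := by
  ext s
  change (∀ᶠ a in U, ∀ᶠ b in V, f (a * b) ∈ s) ↔ ∀ᶠ a in U, ∀ᶠ b in V, f a * f b ∈ s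
  simp only [hf]

theorem mem_closure_iff {α : Type*} {S : Set (Ultrafilter α)} {U : Ultrafilter α} :
    U ∈ closure S ↔ ∀ A ∈ U, ∃ e ∈ S, A ∈ e := by
  simp [ultrafilterBasis_is_basis.mem_closure_iff, ultrafilterBasis, Set.Nonempty, and_comm]

@[to_additive]
theorem exists_chain_of_mul_self {M : Type*} [CommMonoid M] {p : Ultrafilter M}
    (hp : p * p = p) {A : Set M} (hA : A ∈ p) {R : M → M → Prop}
    (hR : ∀ a, ∀ᶠ z in p, R a z) (k : ℕ) :
    ∃ y : Fin k → M, (∀ i, y i ∈ A) ∧ (∀ i j, i < j → R (y i) (y j)) ∧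
      (k ≠ 0 → ∏ i, y i ∈ A) ∧ ∀ᶠ z in p, (∏ i, y i) * z ∈ A := by
  induction k with
  | zero => exact ⟨Fin.elim0, fun i => i.elim0, fun i => i.elim0, by simp, by simpa using hA⟩
  | succ k ih =>
    obtain ⟨y, hyA, hyR, -, hy⟩ := ih
    have hy₂ : ∀ᶠ z in p, ∀ᶠ w in p, (∏ i, y i) * z * w ∈ A := by
      rw [← hp] at hy
      simpa only [mul_assoc] using (eventually_mul p p _).1 hy
    obtain ⟨z, hzA, hyz, hyzw, hRz⟩ := ((show ∀ᶠ z in p, z ∈ A from hA).and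
      (hy.and (hy₂.and (eventually_all.2 fun i => hR (y i))))).exists
    refine ⟨Fin.snoc y z, Fin.forall_fin_succ'.2 ⟨by simpa using hyA, by simpa using hzA⟩, ?_,
      fun _ => ?_, ?_⟩
    · intro i j hij
      induction j using Fin.lastCases with
      | last =>
        obtain ⟨i, rfl⟩ := Fin.exists_castSucc_eq.2 hij.ne
        simpa using hRz i
      | cast j =>
        obtain ⟨i, rfl⟩ := Fin.exists_castSucc_eq.2 (hij.trans (Fin.castSucc_lt_last j)).ne
        simpa using hyR i j (Fin.castSucc_lt_castSucc_iff.1 hij)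
    · simpa [Fin.prod_snoc] using hyz
    · simpa [Fin.prod_snoc] using hyzw

end Ultrafilter

theorem Filter.le_atTop_iff_forall_eventually_ge {α : Type*} [Preorder α] {f : Filter α} :
    f ≤ atTop ↔ ∀ N, ∀ᶠ z in f, N ≤ z := by
  rw [← tendsto_id', tendsto_atTop]
  rfl

namespace Nat

theorem isClosed_setOf_ultrafilter_le_atTop :
    IsClosed {U : Ultrafilter ℕ | (U : Filter ℕ) ≤ atTop} := by
  have : {U : Ultrafilter ℕ | (U : Filter ℕ) ≤ atTop} = ⋂ N, {U | Set.Ici N ∈ U} := by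
    ext U
    simp [atTop_basis.ge_iff]
  rw [this]
  exact isClosed_iInter fun N => ultrafilter_isClosed_basic _

def largeAddIdempotents : Set (Ultrafilter ℕ) := {e | e + e = e ∧ (e : Filter ℕ) ≤ atTop}

theorem largeAddIdempotents_nonempty : largeAddIdempotents.Nonempty := by
  have add_le_atTop (U : Ultrafilter ℕ) {V : Ultrafilter ℕ} (hV : (V : Filter ℕ) ≤ atTop) :
      ((U + V : Ultrafilter ℕ) : Filter ℕ) ≤ atTop :=
    le_atTop_iff_forall_eventually_ge.2 fun N =>
      (U.eventually_add V _).2 <| .of_forall fun _ =>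
        (le_atTop_iff_forall_eventually_ge.1 hV N).mono fun _ h => h.trans le_add_self
  obtain ⟨e, he, hee⟩ := exists_idempotent_in_compact_add_subsemigroup
    Ultrafilter.continuous_add_left _
    ⟨hyperfilter ℕ, hyperfilter_le_cofinite.trans Nat.cofinite_eq_atTop.le⟩
    isClosed_setOf_ultrafilter_le_atTop.isCompact fun U _ _ hV => add_le_atTop U hV
  exact ⟨e, hee, he⟩

theorem le_atTop_of_mem_closure_largeAddIdempotents {U : Ultrafilter ℕ}
    (hU : U ∈ closure largeAddIdempotents) : (U : Filter ℕ) ≤ atTop :=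
  closure_minimal (fun _ he => he.2) isClosed_setOf_ultrafilter_le_atTop hU

theorem mul_mem_closure_largeAddIdempotents {U V : Ultrafilter ℕ}
    (hU : (U : Filter ℕ) ≤ atTop) (hV : V ∈ closure largeAddIdempotents) :
    U * V ∈ closure largeAddIdempotents := by
  refine Ultrafilter.mem_closure_iff.2 fun A hA => ?_
  obtain ⟨x, hx, hxA⟩ := ((eventually_ge_atTop 1).filter_mono hU |>.and hA).exists
  obtain ⟨e, ⟨hee, he⟩, hxAe⟩ := Ultrafilter.mem_closure_iff.1 hV _ hxA
  refine ⟨e.map (x * ·), ⟨?_, ?_⟩, hxAe⟩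
  · rw [← Ultrafilter.map_add_of_map_add (fun a b => Nat.mul_add x a b), hee]
  · exact le_atTop_iff_forall_eventually_ge.2 fun N =>
      (le_atTop_iff_forall_eventually_ge.1 he N).mono fun z hz =>
        hz.trans (Nat.le_mul_of_pos_left z hx)

theorem exists_mul_idempotent_mem_closure_largeAddIdempotents :
    ∃ p : Ultrafilter ℕ, p * p = p ∧ p ∈ closure largeAddIdempotents := by
  obtain ⟨p, hp, hpp⟩ := exists_idempotent_in_compact_subsemigroup
    Ultrafilter.continuous_mul_left _ (largeAddIdempotents_nonempty.mono subset_closure)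
    isClosed_closure.isCompact fun U hU _ hV =>
      mul_mem_closure_largeAddIdempotents (le_atTop_of_mem_closure_largeAddIdempotents hU) hV
  exact ⟨p, hpp, hp⟩

end Nat

theorem sum_ne_mul_of_growth {n q : ℕ} {u : Fin (n + 1) → ℕ} (hq : 1 ≤ q)
    (hq₁ : q = 1 → n ≠ 0) (hu : ∀ i, 0 < u i)
    (hgrowth : ∀ i j, i < j → (n + 1) * (q * u i) < u j) (i : Fin (n + 1)) :
    ∑ j, u j ≠ q * u i := by
  rw [Fin.sum_univ_castSucc]
  have hlast (j : Fin n) : (n + 1) * (q * u j.castSucc) < u (Fin.last n) :=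
    hgrowth _ _ (Fin.castSucc_lt_last j)
  induction i using Fin.lastCases with
  | last =>
    -- `∑ u = q * u_last` would make the lower terms sum to `(q - 1) * u_last`, yet by `hS`
    -- they sum to less than `u_last`.
    have hS : (n + 1) * ∑ j : Fin n, u j.castSucc ≤ n * u (Fin.last n) :=
      calc (n + 1) * ∑ j : Fin n, u j.castSucc = ∑ j : Fin n, (n + 1) * u j.castSucc :=
            Finset.mul_sum ..
        _ ≤ ∑ _j : Fin n, u (Fin.last n) := Finset.sum_le_sum fun j _ =>
            ((Nat.mul_le_mul_left _ (Nat.le_mul_of_pos_left _ hq)).trans_lt (hlast j)).le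
        _ = n * u (Fin.last n) := by simp
    rcases hq.eq_or_lt with rfl | hq₂
    · have : 0 < ∑ j : Fin n, u j.castSucc :=
        Finset.sum_pos (fun j _ => hu _)
          ⟨⟨0, Nat.pos_of_ne_zero (hq₁ rfl)⟩, Finset.mem_univ _⟩
      omega
    · have := Nat.mul_le_mul_right (u (Fin.last n)) hq₂
      have := hu (Fin.last n)
      intro h
      nlinarith
  | cast i =>
    have := hlast i
    have := Nat.le_mul_of_pos_left (q * u i.castSucc) (by omega : 0 < n + 1)
    omega

theorem injective_sumElim_mul_snoc_sum {n m : ℕ} (hnm : 1 ≤ n + m) {y : Fin m → ℕ}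
    (hy : StrictMono y) (hy₁ : ∀ j, 1 < y j) {u : Fin (n + 1) → ℕ}
    (hu : ∀ i, ∏ j, y j < u i) (hgrowth : ∀ i i', i < i' → (n + 1) * ((∏ j, y j) * u i) < u i') :
    Injective (Sum.elim (fun i => (∏ j, y j) * u i) (Fin.snoc y (∑ i, u i))) := by
  set q := ∏ j, y j
  have hyq (j : Fin m) : y j ≤ q :=
    Finset.single_le_prod' (fun j _ => (hy₁ j).le) (Finset.mem_univ j)
  have hq : 1 ≤ q := Finset.one_le_prod' fun j _ => (hy₁ j).le
  have hq₁ : q = 1 → n ≠ 0 := by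
    rintro h rfl
    have := hyq ⟨0, by omega⟩
    have := hy₁ ⟨0, by omega⟩
    omega
  have hu_le_mul (i) : u i ≤ q * u i := Nat.le_mul_of_pos_left _ hq
  refine Injective.sumElim ?_ ?_ ?_
  · refine StrictMono.injective fun i i' hii' => Nat.mul_lt_mul_of_pos_left ?_ hq
    have := Nat.le_mul_of_pos_left (q * u i) (by omega : 0 < n + 1)
    have := hgrowth i i' hii'
    have := hu_le_mul i
    omega
  · refine Fin.snoc_injective_iff.2 ⟨hy.injective, ?_⟩
    rintro ⟨j, hj⟩
    have := Finset.single_le_sum (fun i _ => Nat.zero_le (u i)) (Finset.mem_univ 0)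
    have := hu 0
    have := hyq j
    omega
  · intro i j
    induction j using Fin.lastCases with
    | last =>
      simpa using (sum_ne_mul_of_growth hq hq₁ (fun i => (Nat.zero_le q).trans_lt (hu i))
        hgrowth i).symm
    | cast j =>
      have := hu i
      have := hyq j
      have := hu_le_mul i
      simp only [Fin.snoc_castSucc]
      omega

theorem exists_sum_eq_prod_of_mem {p : Ultrafilter ℕ} (hpp : p * p = p)
    (hp : p ∈ closure Nat.largeAddIdempotents) {C : Set ℕ} (hC : C ∈ p) {n m : ℕ}
    (hn : 0 < n) (hm : 0 < m) (hnm : 3 ≤ n + m) :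
    ∃ (x : Fin n → ℕ) (y : Fin m → ℕ), (∀ i, x i ∈ C) ∧ (∀ j, y j ∈ C) ∧
      Injective (Sum.elim x y) ∧ ∑ i, x i = ∏ j, y j := by
  obtain ⟨n, rfl⟩ := Nat.exists_eq_add_one_of_ne_zero hn.ne'
  obtain ⟨m, rfl⟩ := Nat.exists_eq_add_one_of_ne_zero hm.ne'
  have hp_top := Nat.le_atTop_of_mem_closure_largeAddIdempotents hp
  obtain ⟨y, hyC, hy, -, hqC⟩ := Ultrafilter.exists_chain_of_mul_self hpp
    (inter_mem hC ((eventually_gt_atTop 1).filter_mono hp_top)) (R := (· < ·))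
    (fun a => (eventually_gt_atTop a).filter_mono hp_top) m
  set q := ∏ j, y j
  have hB : C ∩ {z | q * z ∈ C} ∩ Set.Ioi q ∈ p :=
    inter_mem (inter_mem hC (hqC.mono fun z hz => hz.1))
      ((eventually_gt_atTop q).filter_mono hp_top)
  obtain ⟨e, ⟨hee, he⟩, hBe⟩ := Ultrafilter.mem_closure_iff.1 hp _ hB
  obtain ⟨u, huB, hu, hTB, -⟩ := Ultrafilter.exists_chain_of_add_self hee hBe
    (R := fun a z => (n + 1) * (q * a) < z) (fun a => (eventually_gt_atTop _).filter_mono he)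
    (n + 1)
  refine ⟨fun i => q * u i, Fin.snoc y (∑ i, u i), fun i => (huB i).1.2,
    Fin.forall_fin_succ'.2 ⟨by simpa using fun j => (hyC j).1,
      by simpa using (hTB n.succ_ne_zero).1.1⟩,
    injective_sumElim_mul_snoc_sum (by omega) hy (fun j => (hyC j).2) (fun i => (huB i).2) hu,
    ?_⟩
  rw [← Finset.mul_sum, Fin.prod_snoc]

/-- The equation `x₁ + ⋯ + x_n = y₁ ⋯ y_m` (with `n + m ≥ 3`) is injectively
partition regular on ℕ: every finite coloring of the positive integers has a
monochromatic solution in pairwise distinct positive integers. -/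
theorem stmt18 (n m : ℕ) (hn : 0 < n) (hm : 0 < m) (hnm : 3 ≤ n + m)
    (r : ℕ) (col : ℕ → Fin r) :
    ∃ (x : Fin n → ℕ) (y : Fin m → ℕ),
      (∀ i, 0 < x i) ∧ (∀ j, 0 < y j) ∧
      Function.Injective (Sum.elim x y) ∧
      (∃ k : Fin r, (∀ i, col (x i) = k) ∧ (∀ j, col (y j) = k)) ∧
      (∑ i, x i) = (∏ j, y j) := by
  obtain ⟨p, hpp, hp⟩ := Nat.exists_mul_idempotent_mem_closure_largeAddIdempotents
  obtain ⟨k, hk⟩ : ∃ k, ∀ᶠ z in p, col z = k :=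
    Ultrafilter.eventually_exists_iff.1 (.of_forall fun z => ⟨col z, rfl⟩)
  have hpos : ∀ᶠ z in p, 0 < z :=
    (eventually_gt_atTop 0).filter_mono (Nat.le_atTop_of_mem_closure_largeAddIdempotents hp)
  obtain ⟨x, y, hx, hy, hinj, hsum⟩ := exists_sum_eq_prod_of_mem hpp hp (hpos.and hk) hn hm hnm
  exact ⟨x, y, fun i => (hx i).1, fun j => (hy j).1, hinj,
    ⟨k, fun i => (hx i).2, fun j => (hy j).2⟩, hsum⟩
end

section
/- Suppose P(x₁,…,x_n) ∈ ℤ[x₁,…,x_n] factors as a product Q₁·Q₂·⋯·Q_k of polynomials. Then P is injectively partition regular on ℕ if and only if some Q_i is injectively partition regular on ℕ. -/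
/-- A polynomial `P ∈ ℤ[x₁,…,x_n]` is injectively partition regular on ℕ if
every finite coloring of the positive integers admits a monochromatic zero of
`P` in pairwise distinct positive integers. -/
def InjPartReg {n : ℕ} (P : MvPolynomial (Fin n) ℤ) : Prop :=
  ∀ (r : ℕ) (col : ℕ → Fin r), ∃ a : Fin n → ℕ,
    (∀ i, 0 < a i) ∧ Function.Injective a ∧
    (∃ k : Fin r, ∀ i, col (a i) = k) ∧
    MvPolynomial.eval (fun i => (a i : ℤ)) P = 0

/-- If `P = Q₁ ⋯ Q_k`, then `P` is injectively partition regular on ℕ iff some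
factor `Q_i` is. -/
theorem stmt19 (n k : ℕ) (P : MvPolynomial (Fin n) ℤ)
    (Q : Fin k → MvPolynomial (Fin n) ℤ) (hfac : P = ∏ i, Q i) :
    InjPartReg P ↔ ∃ i : Fin k, InjPartReg (Q i) := by
  subst hfac
  constructor
  · intro hP
    by_contra hno
    push_neg at hno
    simp only [InjPartReg, not_forall] at hno
    choose r col hcol using hno
    -- combined coloring
    let ι := ∀ i : Fin k, Fin (r i)
    let e : ι ≃ Fin (Fintype.card ι) := Fintype.equivFin ι
    obtain ⟨a, hpos, hinj, ⟨c, hc⟩, heval⟩ :=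
      hP (Fintype.card ι) (fun m => e (fun i => col i m))
    rw [map_prod] at heval
    obtain ⟨i, _, hQi⟩ := Finset.prod_eq_zero_iff.mp heval
    refine hcol i ⟨a, hpos, hinj, ⟨e.symm c i, fun j => ?_⟩, hQi⟩
    have : (fun i' => col i' (a j)) = e.symm c := by
      have := hc j
      simpa [Equiv.eq_symm_apply] using this
    exact congrFun this i
  · rintro ⟨i, hQi⟩ r col
    obtain ⟨a, hpos, hinj, hmono, heval⟩ := hQi r col
    exact ⟨a, hpos, hinj, hmono, by
      rw [map_prod]; exact Finset.prod_eq_zero (Finset.mem_univ i) heval⟩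
end
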